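/- arXiv:2203.01266 — 5 statements merged into one kernel-verified Lean document; each statement's English description precedes it below -/
import Mathlib

section
/- Let g : ℝ → ℝ be nondecreasing and continuous with g(0) = 0, and let q > 1 and m ≥ 0 satisfy ∫_1^∞ s^{−q−1} (ln s)^m (g(s) − g(−s)) ds < ∞. Let λ be a finite positive measure on a measurable space X, let v : X → ℝ be measurable, and set e(s) = λ({x ∈ X : |v(x)| > s}). Assume there exists C₀ > 0 such that e(s) ≤ C₀ s^{−q} (ln s)^m for all s > e^{2m/q}. Then for every s₀ > e^{2m/q} one has ∫_X g(|v|) dλ ≤ ∫_{{|v| ≤ s₀}} g(|v|) dλ + C₀ q ∫_{s₀}^∞ s^{−q−1} (ln s)^m g(s) ds and ∫_X |g(−|v|)| dλ ≤ ∫_{{|v| ≤ s₀}} |g(−|v|)| dλ − C₀ q ∫_{s₀}^∞ s^{−q−1} (ln s)^m g(−s) ds; in particular g(|v|) and g(−|v|) are λ-integrable. -/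
/-!
Let `ν` be the law of `|v|`. For `s ≥ s₀ > 1` the hypothesis bounds the tail `ν (s, ∞)` by
`C₀ s^(-q) (log s)^m ≤ C₀ ∫_s^∞ q u^(-q-1) (log u)^m du`, i.e. by the tail of the measure `η` with
density `C₀ q u^(-q-1) (log u)^m`. Tail domination gives `∫ h dν ≤ ∫ h dη` on `(s₀, ∞)` for every
continuous nondecreasing `h ≥ 0`: by the layer-cake formula both sides are integrals of the measures
of superlevel sets of `h`, and these are right rays. Applied to `h = g` and `h = -g(-·)` this
controls the integrals over `{|v| > s₀}`; on `{|v| ≤ s₀}` the integrands are bounded.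
-/

open MeasureTheory Set

section

open Filter Topology

theorem IsUpperSet.eq_Ioi_sInf_of_isOpen {T : Set ℝ} (hU : IsUpperSet T) (hT : IsOpen T)
    (hne : T.Nonempty) (hbdd : BddBelow T) : T = Ioi (sInf T) := by
  rw [← (isGLB_csInf hne hbdd).biUnion_Ioi_eq]
  refine Subset.antisymm (fun t ht => ?_) (iUnion₂_subset fun x hx => hU.Ioi_subset hx)
  obtain ⟨l, hlt, hl⟩ := exists_Ioc_subset_of_mem_nhds (hT.mem_nhds ht) ⟨t - 1, by linarith⟩
  exact mem_biUnion (hl ⟨by linarith [show l < (l + t) / 2 by linarith], by linarith⟩)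
    (show (l + t) / 2 < t by linarith)

theorem measure_inter_Ioi_le_of_isUpperSet {ν η : Measure ℝ} {a : ℝ}
    (h : ∀ s ≥ a, ν (Ioi s) ≤ η (Ioi s)) {T : Set ℝ} (hU : IsUpperSet T) (hT : IsOpen T) :
    ν (T ∩ Ioi a) ≤ η (T ∩ Ioi a) := by
  rcases (T ∩ Ioi a).eq_empty_or_nonempty with hemp | hne
  · simp [hemp]
  have hbdd : BddBelow (T ∩ Ioi a) := ⟨a, fun t ht => ht.2.le⟩
  rw [(hU.inter (isUpperSet_Ioi (a := a))).eq_Ioi_sInf_of_isOpen (hT.inter isOpen_Ioi) hne hbdd]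
  exact h _ (le_csInf hne fun t ht => ht.2.le)

theorem setLIntegral_Ioi_le_of_measure_Ioi_le {ν η : Measure ℝ} {a : ℝ} {f : ℝ → ℝ}
    (hf : Monotone f) (hfc : Continuous f) (hfa : 0 ≤ f a)
    (h : ∀ s ≥ a, ν (Ioi s) ≤ η (Ioi s)) :
    ∫⁻ t in Ioi a, ENNReal.ofReal (f t) ∂ν ≤ ∫⁻ t in Ioi a, ENNReal.ofReal (f t) ∂η := by
  have hnn : ∀ μ : Measure ℝ, 0 ≤ᵐ[μ.restrict (Ioi a)] f := fun μ =>
    ae_restrict_of_forall_mem measurableSet_Ioi fun t ht => hfa.trans (hf ht.le)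
  rw [lintegral_eq_lintegral_meas_lt _ (hnn ν) hfc.measurable.aemeasurable,
    lintegral_eq_lintegral_meas_lt _ (hnn η) hfc.measurable.aemeasurable]
  refine lintegral_mono fun τ => ?_
  simp only [Measure.restrict_apply' measurableSet_Ioi]
  exact measure_inter_Ioi_le_of_isUpperSet h (fun x y hxy hx => hx.trans_le (hf hxy))
    (isOpen_lt continuous_const hfc)

theorem ofReal_le_setLIntegral_Ioi_of_hasDerivAt {f f' g : ℝ → ℝ} {a : ℝ}
    (hf : ∀ x ∈ Ici a, HasDerivAt f (f' x) x) (hg : ContinuousOn g (Ici a))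
    (hg₀ : ∀ x ∈ Ioi a, 0 ≤ g x) (hle : ∀ x ∈ Ioi a, -f' x ≤ g x)
    (hlim : Tendsto f atTop (𝓝 0)) :
    ENNReal.ofReal (f a) ≤ ∫⁻ x in Ioi a, ENNReal.ofReal (g x) := by
  have hT : ∀ T ≥ a, ENNReal.ofReal (f a - f T) ≤ ∫⁻ x in Ioi a, ENNReal.ofReal (g x) := by
    intro T hT
    have hint : IntegrableOn g (Icc a T) := (hg.mono Icc_subset_Ici_self).integrableOn_Icc
    have hFTC : f a - f T ≤ ∫ x in a..T, g x := by
      have := intervalIntegral.sub_le_integral_of_hasDeriv_right_of_le hT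
        (fun x hx => (hf x hx.1).continuousAt.continuousWithinAt.neg)
        (fun x hx => (hf x hx.1.le).neg.hasDerivWithinAt) hint
        (fun x hx => hle x hx.1)
      simp only [Pi.neg_apply] at this
      linarith
    rw [intervalIntegral.integral_of_le hT] at hFTC
    calc ENNReal.ofReal (f a - f T) ≤ ENNReal.ofReal (∫ x in Ioc a T, g x) :=
          ENNReal.ofReal_le_ofReal hFTC
      _ = ∫⁻ x in Ioc a T, ENNReal.ofReal (g x) :=
          ofReal_integral_eq_lintegral_ofReal (hint.mono_set Ioc_subset_Icc_self)
            (ae_restrict_of_forall_mem measurableSet_Ioc fun x hx => hg₀ x hx.1)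
      _ ≤ ∫⁻ x in Ioi a, ENNReal.ofReal (g x) := lintegral_mono_set Ioc_subset_Ioi_self
  refine le_of_tendsto ?_ ((eventually_ge_atTop a).mono hT)
  simpa using (ENNReal.tendsto_ofReal ((tendsto_const_nhds (x := f a)).sub hlim))

theorem rpow_mul_log_rpow_nonneg {u : ℝ} (hu : 1 ≤ u) (p m : ℝ) :
    0 ≤ u ^ p * Real.log u ^ m := by
  have := Real.log_nonneg hu
  positivity

theorem tendsto_rpow_neg_mul_log_rpow_atTop {q : ℝ} (hq : 0 < q) (m : ℝ) :
    Tendsto (fun x : ℝ => x ^ (-q) * Real.log x ^ m) atTop (𝓝 0) := by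
  refine (isLittleO_log_rpow_rpow_atTop m hq).tendsto_div_nhds_zero.congr' ?_
  filter_upwards [eventually_gt_atTop 0] with x hx
  rw [div_eq_mul_inv, ← Real.rpow_neg hx.le, mul_comm]

theorem ofReal_rpow_neg_mul_log_rpow_le_setLIntegral {q m s : ℝ} (hq : 0 < q) (hm : 0 ≤ m)
    (hs : 1 < s) :
    ENNReal.ofReal (s ^ (-q) * Real.log s ^ m)
      ≤ ∫⁻ u in Ioi s, ENNReal.ofReal (q * u ^ (-q - 1) * Real.log u ^ m) := by
  have hpos : ∀ x ∈ Ici s, 0 < x := fun x hx => by linarith [hx.out]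
  refine ofReal_le_setLIntegral_Ioi_of_hasDerivAt (f' := fun x =>
      -q * x ^ (-q - 1) * Real.log x ^ m + x ^ (-q) * (x⁻¹ * m * Real.log x ^ (m - 1)))
    (fun x hx => ?_) ?_ (fun x hx => ?_) (fun x hx => ?_)
    (tendsto_rpow_neg_mul_log_rpow_atTop hq m)
  · have hx0 := (hpos x hx).ne'
    exact (Real.hasDerivAt_rpow_const (Or.inl hx0)).mul
      ((Real.hasDerivAt_log hx0).rpow_const (Or.inl (Real.log_pos (hs.trans_le hx)).ne'))
  · exact (continuousOn_const.mul
      (continuousOn_id.rpow_const fun x hx => Or.inl (hpos x hx).ne')).mul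
      ((Real.continuousOn_log.mono fun x hx => (hpos x hx).ne').rpow_const fun _ _ => Or.inr hm)
  · have := rpow_mul_log_rpow_nonneg (hs.trans hx).le (-q - 1) m
    rw [mul_assoc]; positivity
  · have := Real.log_nonneg (hs.trans hx).le
    have : 0 ≤ x ^ (-q) * (x⁻¹ * m * Real.log x ^ (m - 1)) := by
      have : 0 < x := by linarith [hx.out]
      positivity
    linarith

theorem setLIntegral_lt_abs_le_of_tail_le {X : Type*} [MeasurableSpace X] {μ : Measure X}
    [IsFiniteMeasure μ] {v : X → ℝ} (hv : Measurable v) {h : ℝ → ℝ} (hmono : Monotone h)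
    (hcont : Continuous h) {q m C₀ s₀ : ℝ} (hq : 0 < q) (hm : 0 ≤ m) (hC₀ : 0 ≤ C₀)
    (hs₀ : 1 < s₀) (hh : 0 ≤ h s₀)
    (he : ∀ s ≥ s₀, (μ {x | s < |v x|}).toReal ≤ C₀ * s ^ (-q) * Real.log s ^ m)
    (hint : IntegrableOn (fun u => u ^ (-q - 1) * Real.log u ^ m * h u) (Ioi s₀)) :
    ∫⁻ x in {x | s₀ < |v x|}, ENNReal.ofReal (h |v x|) ∂μ
      ≤ ENNReal.ofReal (C₀ * q * ∫ u in Ioi s₀, u ^ (-q - 1) * Real.log u ^ m * h u) := by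
  set W : ℝ → ENNReal := fun u => ENNReal.ofReal (C₀ * (q * u ^ (-q - 1) * Real.log u ^ m))
  have hW : Measurable W := by fun_prop
  have htail : ∀ s ≥ s₀, μ.map (|v ·|) (Ioi s) ≤ volume.withDensity W (Ioi s) := by
    intro s hs
    have hs1 : 1 < s := hs₀.trans_le hs
    rw [Measure.map_apply hv.abs measurableSet_Ioi, withDensity_apply _ measurableSet_Ioi]
    calc μ ((|v ·|) ⁻¹' Ioi s) ≤ ENNReal.ofReal (C₀ * (s ^ (-q) * Real.log s ^ m)) := by
          rw [ENNReal.le_ofReal_iff_toReal_le (measure_ne_top _ _)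
            (mul_nonneg hC₀ (rpow_mul_log_rpow_nonneg hs1.le _ _)), ← mul_assoc]
          exact he s hs
      _ ≤ ∫⁻ u in Ioi s, W u := by
          simp only [W, ENNReal.ofReal_mul hC₀]
          rw [lintegral_const_mul' _ _ ENNReal.ofReal_ne_top]
          exact mul_le_mul_right (ofReal_rpow_neg_mul_log_rpow_le_setLIntegral hq hm hs1) _
  have hnn : ∀ u ∈ Ioi s₀, 0 ≤ C₀ * q * (u ^ (-q - 1) * Real.log u ^ m * h u) := fun u hu =>
    mul_nonneg (mul_nonneg hC₀ hq.le)
      (mul_nonneg (rpow_mul_log_rpow_nonneg (hs₀.trans hu).le _ _) (hh.trans (hmono hu.out.le)))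
  calc ∫⁻ x in {x | s₀ < |v x|}, ENNReal.ofReal (h |v x|) ∂μ
      = ∫⁻ t in Ioi s₀, ENNReal.ofReal (h t) ∂μ.map (|v ·|) :=
        (setLIntegral_map measurableSet_Ioi hcont.measurable.ennreal_ofReal hv.abs).symm
    _ ≤ ∫⁻ t in Ioi s₀, ENNReal.ofReal (h t) ∂volume.withDensity W :=
        setLIntegral_Ioi_le_of_measure_Ioi_le hmono hcont hh htail
    _ = ∫⁻ t in Ioi s₀, ENNReal.ofReal (C₀ * q * (t ^ (-q - 1) * Real.log t ^ m * h t)) := by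
        rw [setLIntegral_withDensity_eq_setLIntegral_mul _ hW (by fun_prop) measurableSet_Ioi]
        refine setLIntegral_congr_fun measurableSet_Ioi fun t ht => ?_
        have := rpow_mul_log_rpow_nonneg (hs₀.trans ht).le (-q - 1) m
        rw [Pi.mul_apply, ← ENNReal.ofReal_mul (by rw [mul_assoc]; positivity)]
        ring_nf
    _ = ENNReal.ofReal (C₀ * q * ∫ u in Ioi s₀, u ^ (-q - 1) * Real.log u ^ m * h u) := by
        rw [← integral_const_mul, ofReal_integral_eq_lintegral_ofReal (hint.const_mul _)
          (ae_restrict_of_forall_mem measurableSet_Ioi hnn)]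

theorem integrable_comp_abs_and_integral_le_of_tail_le {X : Type*} [MeasurableSpace X]
    {μ : Measure X} [IsFiniteMeasure μ] {v : X → ℝ} (hv : Measurable v) {h : ℝ → ℝ}
    (hmono : Monotone h) (hcont : Continuous h) (h₀ : 0 ≤ h 0) {q m C₀ a : ℝ} (hq : 0 < q)
    (hm : 0 ≤ m) (hC₀ : 0 ≤ C₀) (ha : 1 ≤ a)
    (he : ∀ s > a, (μ {x | s < |v x|}).toReal ≤ C₀ * s ^ (-q) * Real.log s ^ m)
    (hint : IntegrableOn (fun u => u ^ (-q - 1) * Real.log u ^ m * h u) (Ioi a)) :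
    Integrable (fun x => h |v x|) μ ∧
    ∀ s₀ > a, (∫ x, h |v x| ∂μ) ≤ (∫ x in {x | |v x| ≤ s₀}, h |v x| ∂μ)
        + C₀ * q * ∫ u in Ioi s₀, u ^ (-q - 1) * Real.log u ^ m * h u := by
  have hnn : ∀ x, 0 ≤ h |v x| := fun x => h₀.trans (hmono (abs_nonneg _))
  have hmeas : Measurable fun x => h |v x| := hcont.measurable.comp hv.abs
  have hle : ∀ s₀ : ℝ, MeasurableSet {x | |v x| ≤ s₀} := fun _ =>
    measurableSet_le hv.abs measurable_const
  have hcompl : ∀ s₀ : ℝ, {x | |v x| ≤ s₀}ᶜ = {x | s₀ < |v x|} := fun s₀ => by ext; simp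
  have htail : ∀ s₀ > a, ∫⁻ x in {x | s₀ < |v x|}, ENNReal.ofReal (h |v x|) ∂μ
      ≤ ENNReal.ofReal (C₀ * q * ∫ u in Ioi s₀, u ^ (-q - 1) * Real.log u ^ m * h u) :=
    fun s₀ hs₀ => setLIntegral_lt_abs_le_of_tail_le hv hmono hcont hq hm hC₀ (ha.trans_lt hs₀)
      (h₀.trans (hmono (by linarith))) (fun s hs => he s (hs₀.trans_le hs))
      (hint.mono_set (Ioi_subset_Ioi hs₀.le))
  have hintegrable : Integrable (fun x => h |v x|) μ := by
    have hbdd : IntegrableOn (fun x => h |v x|) {x | |v x| ≤ a + 1} μ :=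
      Measure.integrableOn_of_bounded (M := h (a + 1)) (measure_ne_top _ _)
        hmeas.aestronglyMeasurable (ae_restrict_of_forall_mem (hle _) fun x hx => by
          rw [Real.norm_of_nonneg (hnn x)]; exact hmono hx)
    have hunbdd : IntegrableOn (fun x => h |v x|) {x | |v x| ≤ a + 1}ᶜ μ := by
      refine ⟨hmeas.aestronglyMeasurable, (hasFiniteIntegral_iff_ofReal
        (ae_of_all _ hnn)).2 ?_⟩
      rw [hcompl]
      exact (htail (a + 1) (by linarith)).trans_lt ENNReal.ofReal_lt_top
    simpa using hbdd.union hunbdd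
  refine ⟨hintegrable, fun s₀ hs₀ => ?_⟩
  rw [← integral_add_compl (hle s₀) hintegrable, hcompl]
  have hI : 0 ≤ ∫ u in Ioi s₀, u ^ (-q - 1) * Real.log u ^ m * h u :=
    setIntegral_nonneg measurableSet_Ioi fun u (hu : s₀ < u) => mul_nonneg
      (rpow_mul_log_rpow_nonneg (by linarith) _ _) (h₀.trans (hmono (by linarith)))
  gcongr
  rw [integral_eq_lintegral_of_nonneg_ae (ae_of_all _ hnn) hmeas.aestronglyMeasurable.restrict]
  exact ENNReal.toReal_le_of_le_ofReal (by positivity) (htail s₀ hs₀)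

end

theorem integrableOn_rpow_mul_log_rpow_mul_of_le {q m : ℝ} {F h : ℝ → ℝ}
    (hF : IntegrableOn (fun s => s ^ (-q - 1) * Real.log s ^ m * F s) (Ioi 1))
    (hh : Measurable h) (h₀ : ∀ s > 1, 0 ≤ h s) (hle : ∀ s > 1, h s ≤ F s) :
    IntegrableOn (fun s => s ^ (-q - 1) * Real.log s ^ m * h s) (Ioi 1) := by
  refine hF.mono' (by fun_prop) (ae_restrict_of_forall_mem measurableSet_Ioi fun s hs => ?_)
  have hw := rpow_mul_log_rpow_nonneg (le_of_lt hs) (-q - 1) m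
  rw [Real.norm_of_nonneg (mul_nonneg hw (h₀ s hs))]
  exact mul_le_mul_of_nonneg_left (hle s hs) hw

theorem stmt_8
    {X : Type*} [MeasurableSpace X]
    (μX : Measure X) [IsFiniteMeasure μX]
    (g : ℝ → ℝ) (hg_mono : Monotone g) (hg_cont : Continuous g) (hg0 : g 0 = 0)
    (q m : ℝ) (hq : 1 < q) (hm : 0 ≤ m)
    (hsub : IntegrableOn
      (fun s => s ^ (-q - 1) * Real.log s ^ m * (g s - g (-s))) (Ioi (1 : ℝ)))
    (v : X → ℝ) (hv : Measurable v)
    (C₀ : ℝ) (hC₀ : 0 < C₀)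
    (he : ∀ s > Real.exp (2 * m / q),
      (μX {x | s < |v x|}).toReal ≤ C₀ * s ^ (-q) * Real.log s ^ m) :
    (Integrable (fun x => g |v x|) μX ∧ Integrable (fun x => g (-|v x|)) μX) ∧
    ∀ s₀ > Real.exp (2 * m / q),
      ((∫ x, g |v x| ∂μX) ≤ (∫ x in {x | |v x| ≤ s₀}, g |v x| ∂μX)
          + C₀ * q * ∫ s in Ioi s₀, s ^ (-q - 1) * Real.log s ^ m * g s) ∧
      ((∫ x, |g (-|v x|)| ∂μX) ≤ (∫ x in {x | |v x| ≤ s₀}, |g (-|v x|)| ∂μX)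
          - C₀ * q * ∫ s in Ioi s₀, s ^ (-q - 1) * Real.log s ^ m * g (-s)) := by
  have hpos : ∀ s ≥ 0, 0 ≤ g s := fun s hs => hg0 ▸ hg_mono hs
  have hneg : ∀ s ≥ 0, g (-s) ≤ 0 := fun s hs => hg0 ▸ hg_mono (neg_nonpos.2 hs)
  have ha : 1 ≤ Real.exp (2 * m / q) := Real.one_le_exp (by positivity)
  have hIoi := Ioi_subset_Ioi ha
  have hw₁ : IntegrableOn (fun s => s ^ (-q - 1) * Real.log s ^ m * g s) (Ioi 1) :=
    integrableOn_rpow_mul_log_rpow_mul_of_le hsub hg_cont.measurable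
      (fun s hs => hpos s (by linarith)) (fun s hs => by linarith [hneg s (by linarith)])
  have hw₂ : IntegrableOn (fun s => s ^ (-q - 1) * Real.log s ^ m * -g (-s)) (Ioi 1) :=
    integrableOn_rpow_mul_log_rpow_mul_of_le hsub (by fun_prop)
      (fun s hs => by linarith [hneg s (by linarith)])
      (fun s hs => by linarith [hpos s (by linarith)])
  obtain ⟨hint₁, hbound₁⟩ := integrable_comp_abs_and_integral_le_of_tail_le hv hg_mono hg_cont
    hg0.ge (by linarith) hm hC₀.le ha he (hw₁.mono_set hIoi)
  obtain ⟨hint₂, hbound₂⟩ := integrable_comp_abs_and_integral_le_of_tail_le hv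
    (h := fun s => -g (-s)) (fun s t hst => neg_le_neg (hg_mono (neg_le_neg hst)))
    (by fun_prop) (by simp [hg0]) (by linarith) hm hC₀.le ha he (hw₂.mono_set hIoi)
  have habs : ∀ x, |g (-|v x|)| = -g (-|v x|) := fun x => abs_of_nonpos (hneg _ (abs_nonneg _))
  refine ⟨⟨hint₁, by simpa using hint₂.neg⟩, fun s₀ hs₀ => ⟨hbound₁ s₀ hs₀, ?_⟩⟩
  have := hbound₂ s₀ hs₀
  simp only [habs, mul_neg, integral_neg] at this ⊢
  linarith
end

section
/- Let R > 0. There exists a constant C = C(R, N, k, μ, p) such that for every finite positive Borel measure ν on ℝ^k with compact support contained in B^k(0, R/2), ∫_{B^k(0,R)} ∫_0^R x₁^{N−k−1−(p+1)α₋} ( ∫_{B^k(0,R)} ( x₁ + |x′−y′| )^{−(N−2α₋−2)} dν(y′) )^p dx₁ dx′ ≤ C ∫_{ℝ^k} ( ∫_0^{8R} ν(B^k(x′,r)) r^{ϑ−k−1} dr )^p dx′. -/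
/-!
Put `q = N - 2α₋ - 2`, `e = ϑ - k - 1` and `β = q + e + 1 > 0`, so that the weight is
`x₁ ^ (pβ - 1)`; write `I(x₁) = ∫ (x₁ + |x' - y'|)^(-q) dν(y')` and `W = W_{ϑ,8R}[ν](x')`.
By Tonelli, `W = ∫ ∫_{|x' - y'|}^{8R} r^e dr dν(y')`, and for `2 max(x₁, d) ≤ 8R` the tail
`∫_d^{8R} r^e dr` dominates `2^e max(x₁, d)^(e + 1)`. Comparing kernels under `dν(y')` gives the
pointwise bound `x₁^β I(x₁) ≲ W` and the averaged bound `∫_0^R x₁^(β-1) I(x₁) dx₁ ≲ W`. Since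
`x₁^(pβ-1) I^p = (x₁^β I)^(p-1) · x₁^(β-1) I`, together they bound the `x₁`-integral by `C W^p`
uniformly in `x' ∈ B(0, R)`, and integrating in `x'` finishes.
-/

open scoped ENNReal
open MeasureTheory Metric Set

lemma ENNReal.rpow_eq_rpow_sub_one_mul {p : ℝ} (hp : 1 ≤ p) (x : ℝ≥0∞) :
    x ^ p = x ^ (p - 1) * x := by
  conv_lhs => rw [← sub_add_cancel p 1]
  rw [ENNReal.rpow_add_of_nonneg _ _ (sub_nonneg.mpr hp) zero_le_one, ENNReal.rpow_one]

lemma lintegral_Ioc_rpow {c t : ℝ} (hc : 0 ≤ c) (ht : -1 < t) :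
    ∫⁻ x in Ioc 0 c, ENNReal.ofReal (x ^ t) = ENNReal.ofReal (c ^ (t + 1) / (t + 1)) := by
  have hint : IntegrableOn (fun x : ℝ => x ^ t) (Ioc 0 c) :=
    (intervalIntegrable_iff_integrableOn_Ioc_of_le hc).mp
      (intervalIntegral.intervalIntegrable_rpow' ht)
  rw [← ofReal_integral_eq_lintegral_ofReal hint
      (ae_restrict_of_forall_mem measurableSet_Ioc fun x hx => Real.rpow_nonneg hx.1.le t),
    ← intervalIntegral.integral_of_le hc, integral_rpow (Or.inl ht),
    Real.zero_rpow (by linarith), sub_zero]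

lemma ofReal_rpow_le_lintegral_Ioo_rpow {m c e : ℝ} (hm : 0 < m) (hmc : 2 * m ≤ c) (he : e ≤ 0) :
    ENNReal.ofReal (m ^ (e + 1)) ≤
      ENNReal.ofReal (2 ^ (-e)) * ∫⁻ s in Ioo m c, ENNReal.ofReal (s ^ e) := by
  have hlow : ENNReal.ofReal ((2 * m) ^ e) * ENNReal.ofReal m ≤
      ∫⁻ s in Ioo m c, ENNReal.ofReal (s ^ e) :=
    calc ENNReal.ofReal ((2 * m) ^ e) * ENNReal.ofReal m
        = ∫⁻ _ in Ioo m (2 * m), ENNReal.ofReal ((2 * m) ^ e) := by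
          rw [setLIntegral_const, Real.volume_Ioo]; ring_nf
      _ ≤ ∫⁻ s in Ioo m (2 * m), ENNReal.ofReal (s ^ e) :=
          setLIntegral_mono' measurableSet_Ioo fun s hs => ENNReal.ofReal_le_ofReal
            (Real.rpow_le_rpow_of_nonpos (hm.trans hs.1) hs.2.le he)
      _ ≤ ∫⁻ s in Ioo m c, ENNReal.ofReal (s ^ e) :=
          lintegral_mono_set (Ioo_subset_Ioo_right hmc)
  calc ENNReal.ofReal (m ^ (e + 1))
      = ENNReal.ofReal (2 ^ (-e)) * (ENNReal.ofReal ((2 * m) ^ e) * ENNReal.ofReal m) := by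
        rw [← ENNReal.ofReal_mul (by positivity), ← ENNReal.ofReal_mul (by positivity),
          Real.mul_rpow zero_le_two hm.le, Real.rpow_add_one hm.ne', Real.rpow_neg zero_le_two]
        field_simp
    _ ≤ _ := by gcongr

lemma ofReal_rpow_mul_rpow_add_le {x d c q e : ℝ} (hx : 0 < x) (hd : 0 ≤ d) (hxc : 2 * x ≤ c)
    (hdc : 2 * d ≤ c) (hq : 0 ≤ q) (he : e ≤ 0) (hβ : 0 ≤ q + e + 1) :
    ENNReal.ofReal (x ^ (q + e + 1) * (x + d) ^ (-q)) ≤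
      ENNReal.ofReal (2 ^ (-e)) * ∫⁻ s in Ioo d c, ENNReal.ofReal (s ^ e) := by
  set m := max x d
  have hm : 0 < m := hx.trans_le (le_max_left x d)
  calc ENNReal.ofReal (x ^ (q + e + 1) * (x + d) ^ (-q))
      ≤ ENNReal.ofReal (m ^ (q + e + 1) * m ^ (-q)) := by
        refine ENNReal.ofReal_le_ofReal (mul_le_mul (Real.rpow_le_rpow hx.le (le_max_left x d) hβ)
          (Real.rpow_le_rpow_of_nonpos hm (max_le_add_of_nonneg hx.le hd) (neg_nonpos.mpr hq))
          (by positivity) (by positivity))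
    _ = ENNReal.ofReal (m ^ (e + 1)) := by
        rw [← Real.rpow_add hm]; ring_nf
    _ ≤ ENNReal.ofReal (2 ^ (-e)) * ∫⁻ s in Ioo m c, ENNReal.ofReal (s ^ e) :=
        ofReal_rpow_le_lintegral_Ioo_rpow hm
          (by rw [mul_max_of_nonneg _ _ zero_le_two]; exact max_le hxc hdc) he
    _ ≤ _ := mul_le_mul_right (lintegral_mono_set (Ioo_subset_Ioo_left (le_max_right x d))) _

lemma lintegral_rpow_mul_rpow_add_le {d a c q e : ℝ} (hd : 0 ≤ d) (hdc : 2 * d ≤ c) (hac : a ≤ c)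
    (hq : 0 ≤ q) (he : e ≤ 0) (hβ : 0 < q + e + 1) :
    ∫⁻ x in Ioo 0 a, ENNReal.ofReal (x ^ (q + e) * (x + d) ^ (-q)) ≤
      ENNReal.ofReal (2 ^ (-e) / (q + e + 1) + 1) * ∫⁻ s in Ioo d c, ENNReal.ofReal (s ^ e) := by
  set T := ∫⁻ s in Ioo d c, ENNReal.ofReal (s ^ e)
  have hnear : ∫⁻ x in Ioc 0 d, ENNReal.ofReal (x ^ (q + e) * (x + d) ^ (-q)) ≤
      ENNReal.ofReal (2 ^ (-e) / (q + e + 1)) * T := by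
    rcases hd.eq_or_lt with rfl | hd
    · simp
    calc ∫⁻ x in Ioc 0 d, ENNReal.ofReal (x ^ (q + e) * (x + d) ^ (-q))
        ≤ ∫⁻ x in Ioc 0 d, ENNReal.ofReal (d ^ (-q)) * ENNReal.ofReal (x ^ (q + e)) := by
          refine setLIntegral_mono' measurableSet_Ioc fun x hx => ?_
          rw [← ENNReal.ofReal_mul (by positivity), mul_comm (d ^ (-q))]
          exact ENNReal.ofReal_le_ofReal (mul_le_mul_of_nonneg_left
            (Real.rpow_le_rpow_of_nonpos hd (by linarith [hx.1]) (neg_nonpos.mpr hq))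
            (Real.rpow_nonneg hx.1.le _))
      _ = ENNReal.ofReal (d ^ (e + 1) / (q + e + 1)) := by
          rw [lintegral_const_mul' _ _ ENNReal.ofReal_ne_top,
            lintegral_Ioc_rpow hd.le (by linarith),
            ← ENNReal.ofReal_mul (by positivity), mul_div_assoc', ← Real.rpow_add hd]
          ring_nf
      _ ≤ ENNReal.ofReal (2 ^ (-e) / (q + e + 1)) * T := by
          rw [div_eq_mul_inv, ENNReal.ofReal_mul (by positivity), div_eq_mul_inv,
            ENNReal.ofReal_mul (by positivity), mul_right_comm]
          gcongr
          exact ofReal_rpow_le_lintegral_Ioo_rpow hd hdc he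
  have hfar : ∫⁻ x in Ioo d a, ENNReal.ofReal (x ^ (q + e) * (x + d) ^ (-q)) ≤ T := by
    calc ∫⁻ x in Ioo d a, ENNReal.ofReal (x ^ (q + e) * (x + d) ^ (-q))
        ≤ ∫⁻ x in Ioo d a, ENNReal.ofReal (x ^ e) := by
          refine setLIntegral_mono' measurableSet_Ioo fun x hx => ENNReal.ofReal_le_ofReal ?_
          have hx0 : 0 < x := hd.trans_lt hx.1
          calc x ^ (q + e) * (x + d) ^ (-q) ≤ x ^ (q + e) * x ^ (-q) := by
                exact mul_le_mul_of_nonneg_left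
                  (Real.rpow_le_rpow_of_nonpos hx0 (by linarith) (neg_nonpos.mpr hq))
                  (by positivity)
            _ = x ^ e := by rw [← Real.rpow_add hx0]; ring_nf
      _ ≤ T := lintegral_mono_set (Ioo_subset_Ioo_right hac)
  calc ∫⁻ x in Ioo 0 a, ENNReal.ofReal (x ^ (q + e) * (x + d) ^ (-q))
      ≤ ∫⁻ x in Ioc 0 d ∪ Ioo d a, ENNReal.ofReal (x ^ (q + e) * (x + d) ^ (-q)) :=
        lintegral_mono_set fun x hx => (le_or_gt x d).imp (fun h => ⟨hx.1, h⟩) fun h => ⟨h, hx.2⟩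
    _ ≤ _ := lintegral_union_le _ _ _
    _ ≤ ENNReal.ofReal (2 ^ (-e) / (q + e + 1)) * T + T := add_le_add hnear hfar
    _ = _ := by
        rw [ENNReal.ofReal_add (by positivity) zero_le_one, ENNReal.ofReal_one, add_mul, one_mul]

section WolffPotential

variable {E : Type*} [PseudoMetricSpace E] [MeasurableSpace E]

/-- In the paper's notation, `W_{ϑ,c}[ν] = wolffPotential ν (ϑ - k - 1) c`. -/
noncomputable def wolffPotential (ν : Measure E) (e c : ℝ) (x : E) : ℝ≥0∞ :=
  ∫⁻ r in Ioo 0 c, ν (ball x r) * ENNReal.ofReal (r ^ e)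

lemma wolffPotential_mono {ν ν' : Measure E} (h : ν ≤ ν') (e c : ℝ) (x : E) :
    wolffPotential ν e c x ≤ wolffPotential ν' e c x :=
  lintegral_mono fun _ => mul_le_mul_left (h _) _

variable [OpensMeasurableSpace E]

lemma setLIntegral_measure_ball_mul (ν : Measure E) [SFinite ν] (x : E) (A : Set ℝ)
    {h : ℝ → ℝ≥0∞} (hh : Measurable h) :
    ∫⁻ r in A, ν (ball x r) * h r = ∫⁻ y, (∫⁻ r in A ∩ Ioi (dist y x), h r) ∂ν := by
  have hball : ∀ r, ν (ball x r) * h r = ∫⁻ y, (Ioi (dist y x)).indicator h r ∂ν := by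
    intro r
    rw [mul_comm, ← lintegral_indicator_const measurableSet_ball]
    rfl
  have hmeas : Measurable (Function.uncurry fun r y => (Ioi (dist y x)).indicator h r) :=
    (hh.comp measurable_fst).indicator (measurableSet_lt
      ((continuous_id.dist continuous_const).measurable.comp measurable_snd) measurable_fst)
  simp_rw [hball]
  rw [lintegral_lintegral_swap hmeas.aemeasurable]
  simp_rw [lintegral_indicator measurableSet_Ioi, Measure.restrict_restrict measurableSet_Ioi,
    inter_comm]

lemma wolffPotential_eq_lintegral (ν : Measure E) [SFinite ν] (e c : ℝ) (x : E) :
    wolffPotential ν e c x = ∫⁻ y, (∫⁻ r in Ioo (dist y x) c, ENNReal.ofReal (r ^ e)) ∂ν := by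
  rw [wolffPotential, setLIntegral_measure_ball_mul ν x _ (by fun_prop)]
  simp_rw [Ioo_inter_Ioi, max_eq_right dist_nonneg]

variable {ν : Measure E} {z : E} {a c q e : ℝ}

lemma ofReal_rpow_mul_lintegral_le_wolffPotential {x : ℝ} (hx : 0 < x) (hxc : 2 * x ≤ c)
    (hν : ∀ᵐ y ∂ν, 2 * dist y z ≤ c) (hq : 0 ≤ q) (he : e ≤ 0) (hβ : 0 ≤ q + e + 1) [SFinite ν] :
    ENNReal.ofReal (x ^ (q + e + 1)) * ∫⁻ y, ENNReal.ofReal ((x + dist z y) ^ (-q)) ∂ν ≤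
      ENNReal.ofReal (2 ^ (-e)) * wolffPotential ν e c z := by
  rw [← lintegral_const_mul' _ _ ENNReal.ofReal_ne_top, wolffPotential_eq_lintegral,
    ← lintegral_const_mul' _ _ ENNReal.ofReal_ne_top]
  refine lintegral_mono_ae (hν.mono fun y hy => ?_)
  rw [← ENNReal.ofReal_mul (Real.rpow_nonneg hx.le _), dist_comm]
  exact ofReal_rpow_mul_rpow_add_le hx dist_nonneg hxc hy hq he hβ

lemma lintegral_rpow_mul_lintegral_le_wolffPotential (hac : a ≤ c)
    (hν : ∀ᵐ y ∂ν, 2 * dist y z ≤ c) (hq : 0 ≤ q) (he : e ≤ 0) (hβ : 0 < q + e + 1) [SFinite ν] :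
    ∫⁻ x in Ioo 0 a, ENNReal.ofReal (x ^ (q + e)) *
        ∫⁻ y, ENNReal.ofReal ((x + dist z y) ^ (-q)) ∂ν ≤
      ENNReal.ofReal (2 ^ (-e) / (q + e + 1) + 1) * wolffPotential ν e c z := by
  have hmeas : Measurable (Function.uncurry fun (x : ℝ) (y : E) =>
      ENNReal.ofReal (x ^ (q + e) * (x + dist z y) ^ (-q))) := by
    refine Measurable.ennreal_ofReal (Measurable.mul (by fun_prop) (Measurable.pow_const ?_ _))
    exact measurable_fst.add ((continuous_const.dist continuous_id).measurable.comp measurable_snd)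
  calc ∫⁻ x in Ioo 0 a, ENNReal.ofReal (x ^ (q + e)) *
        ∫⁻ y, ENNReal.ofReal ((x + dist z y) ^ (-q)) ∂ν
      = ∫⁻ x in Ioo 0 a, ∫⁻ y, ENNReal.ofReal (x ^ (q + e) * (x + dist z y) ^ (-q)) ∂ν := by
        refine setLIntegral_congr_fun measurableSet_Ioo fun x hx => ?_
        rw [← lintegral_const_mul' _ _ ENNReal.ofReal_ne_top]
        simp_rw [ENNReal.ofReal_mul (Real.rpow_nonneg hx.1.le _)]
    _ = ∫⁻ y, (∫⁻ x in Ioo 0 a, ENNReal.ofReal (x ^ (q + e) * (x + dist z y) ^ (-q))) ∂ν :=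
        lintegral_lintegral_swap hmeas.aemeasurable
    _ ≤ ∫⁻ y, ENNReal.ofReal (2 ^ (-e) / (q + e + 1) + 1) *
          (∫⁻ r in Ioo (dist y z) c, ENNReal.ofReal (r ^ e)) ∂ν := by
        refine lintegral_mono_ae (hν.mono fun y hy => ?_)
        rw [dist_comm z y]
        exact lintegral_rpow_mul_rpow_add_le dist_nonneg hy hac hq he hβ
    _ = _ := by rw [lintegral_const_mul' _ _ ENNReal.ofReal_ne_top, wolffPotential_eq_lintegral]

lemma lintegral_rpow_mul_lintegral_rpow_le_wolffPotential {p : ℝ} (hp : 1 ≤ p) (ha : 0 ≤ a)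
    (hac : 2 * a ≤ c) (hν : ∀ᵐ y ∂ν, 2 * dist y z ≤ c) (hq : 0 ≤ q) (he : e ≤ 0) (hβ : 0 < q + e + 1) [SFinite ν] :
    ∫⁻ x in Ioo 0 a, ENNReal.ofReal (x ^ (p * (q + e + 1) - 1)) *
        (∫⁻ y, ENNReal.ofReal ((x + dist z y) ^ (-q)) ∂ν) ^ p ≤
      ENNReal.ofReal ((2 ^ (-e)) ^ (p - 1) * (2 ^ (-e) / (q + e + 1) + 1)) *
        wolffPotential ν e c z ^ p := by
  set I := fun x : ℝ => ∫⁻ y, ENNReal.ofReal ((x + dist z y) ^ (-q)) ∂ν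
  set W := wolffPotential ν e c z
  have hp1 : 0 ≤ p - 1 := sub_nonneg.mpr hp
  have hImeas : Measurable I := by
    refine Measurable.lintegral_prod_right (Measurable.ennreal_ofReal (Measurable.pow_const ?_ _))
    exact measurable_fst.add ((continuous_const.dist continuous_id).measurable.comp measurable_snd)
  have hpt : ∀ x ∈ Ioo 0 a, ENNReal.ofReal (x ^ (p * (q + e + 1) - 1)) * I x ^ p ≤
      (ENNReal.ofReal (2 ^ (-e)) * W) ^ (p - 1) * (ENNReal.ofReal (x ^ (q + e)) * I x) := by
    intro x hx
    have hx0 := hx.1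
    have hsplit : ENNReal.ofReal (x ^ (p * (q + e + 1) - 1)) =
        ENNReal.ofReal (x ^ (q + e + 1)) ^ (p - 1) * ENNReal.ofReal (x ^ (q + e)) := by
      rw [ENNReal.ofReal_rpow_of_nonneg (Real.rpow_nonneg hx0.le _) hp1, ← Real.rpow_mul hx0.le,
        ← ENNReal.ofReal_mul (by positivity), ← Real.rpow_add hx0]
      ring_nf
    calc ENNReal.ofReal (x ^ (p * (q + e + 1) - 1)) * I x ^ p
        = (ENNReal.ofReal (x ^ (q + e + 1)) * I x) ^ (p - 1) *
            (ENNReal.ofReal (x ^ (q + e)) * I x) := by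
          rw [hsplit, ENNReal.rpow_eq_rpow_sub_one_mul hp (I x),
            ENNReal.mul_rpow_of_nonneg _ _ hp1]
          ring
      _ ≤ _ := mul_le_mul_left (ENNReal.rpow_le_rpow (ofReal_rpow_mul_lintegral_le_wolffPotential
          hx0 (by linarith [hx.2]) hν hq he hβ.le) hp1) _
  calc ∫⁻ x in Ioo 0 a, ENNReal.ofReal (x ^ (p * (q + e + 1) - 1)) * I x ^ p
      ≤ ∫⁻ x in Ioo 0 a, (ENNReal.ofReal (2 ^ (-e)) * W) ^ (p - 1) *
          (ENNReal.ofReal (x ^ (q + e)) * I x) := setLIntegral_mono' measurableSet_Ioo hpt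
    _ ≤ (ENNReal.ofReal (2 ^ (-e)) * W) ^ (p - 1) *
          (ENNReal.ofReal (2 ^ (-e) / (q + e + 1) + 1) * W) := by
        rw [lintegral_const_mul'' _ (by fun_prop)]
        exact mul_le_mul_right
          (lintegral_rpow_mul_lintegral_le_wolffPotential (by linarith) hν hq he hβ) _
    _ = _ := by
        rw [ENNReal.ofReal_mul (by positivity), ENNReal.mul_rpow_of_nonneg _ _ hp1,
          ENNReal.ofReal_rpow_of_nonneg (by positivity) hp1, ENNReal.rpow_eq_rpow_sub_one_mul hp W]
        ring

end WolffPotential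

lemma exponents_admissible {n k αm αp p ϑ : ℝ} (hk : 1 ≤ k) (hsum : αm + αp = n - k - 2)
    (hαmp : αm ≤ αp) (hαp : 0 < αp) (hp : 1 ≤ p) (hpαp : p * αp < 2 + αp)
    (hpϑ : p * ϑ = 2 - (p - 1) * αp) :
    0 ≤ n - 2 * αm - 2 ∧ ϑ - k - 1 ≤ 0 ∧ 0 < (n - 2 * αm - 2) + (ϑ - k - 1) + 1 ∧
      n - k - 1 - (p + 1) * αm = p * ((n - 2 * αm - 2) + (ϑ - k - 1) + 1) - 1 :=
  ⟨by linarith, by nlinarith, by nlinarith, by linear_combination (p - 1) * hsum - hpϑ⟩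

theorem stmt_10_general
    (N k : ℕ) (hk1 : 1 ≤ k) (hk : k + 2 < N)
    (μ H αm αp : ℝ)
    (hH : H = ((N : ℝ) - (k : ℝ) - 2) / 2)
    (hαm : αm = H - Real.sqrt (H ^ 2 - μ)) (hαp : αp = H + Real.sqrt (H ^ 2 - μ))
    (p ϑ : ℝ)
    (hp1 : max 1 (((N : ℝ) - (k : ℝ) - αm) / ((N : ℝ) - 2 - αm)) < p)
    (hp2 : p < (2 + αp) / αp)
    (hϑ : ϑ = (2 - (p - 1) * αp) / p)
    (R : ℝ)
    :
    ∃ C > 0, ∀ ν : Measure (EuclideanSpace ℝ (Fin k)), IsFiniteMeasure ν →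
      (∃ K, IsCompact K ∧ K ⊆ Metric.ball (0 : EuclideanSpace ℝ (Fin k)) (R / 2) ∧
        ν Kᶜ = 0) →
      (∫⁻ x' in Metric.ball (0 : EuclideanSpace ℝ (Fin k)) R,
        ∫⁻ x₁ in Ioo (0 : ℝ) R,
          ENNReal.ofReal (x₁ ^ ((N : ℝ) - (k : ℝ) - 1 - (p + 1) * αm)) *
            (∫⁻ y' in Metric.ball (0 : EuclideanSpace ℝ (Fin k)) R,
              ENNReal.ofReal ((x₁ + dist x' y') ^ (-((N : ℝ) - 2 * αm - 2))) ∂ν) ^ p)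
      ≤ ENNReal.ofReal C *
        ∫⁻ x' : EuclideanSpace ℝ (Fin k),
          (∫⁻ r in Ioo (0 : ℝ) (8 * R),
            ν (Metric.ball x' r) * ENNReal.ofReal (r ^ (ϑ - (k : ℝ) - 1))) ^ p := by
  have hk1' : (1 : ℝ) ≤ k := by exact_mod_cast hk1
  have hkN : (k : ℝ) + 2 < N := by exact_mod_cast hk
  have hsqrt := Real.sqrt_nonneg (H ^ 2 - μ)
  have hαp0 : 0 < αp := by linarith
  have hp : 1 ≤ p := (le_max_left _ _).trans hp1.le
  have hpϑ : p * ϑ = 2 - (p - 1) * αp := by rw [hϑ]; field_simp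
  have hsum : αm + αp = N - k - 2 := by linarith
  obtain ⟨hq, he, hβ, hexp⟩ := exponents_admissible hk1' hsum (by linarith) hαp0 hp
    ((lt_div_iff₀ hαp0).mp hp2) hpϑ
  refine ⟨(2 ^ (-(ϑ - k - 1))) ^ (p - 1) *
      (2 ^ (-(ϑ - k - 1)) / (N - 2 * αm - 2 + (ϑ - k - 1) + 1) + 1),
    mul_pos (by positivity) (add_pos (div_pos (by positivity) hβ) one_pos), fun ν _ _ => ?_⟩
  rw [hexp, ← lintegral_const_mul' _ _ ENNReal.ofReal_ne_top]
  refine (setLIntegral_mono' measurableSet_ball fun x' hx' => ?_).trans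
    (setLIntegral_le_lintegral _ _)
  have hR := pos_of_mem_ball hx'
  have hν : ∀ᵐ y ∂ν.restrict (ball 0 R), 2 * dist y x' ≤ 8 * R :=
    (ae_restrict_mem measurableSet_ball).mono fun y hy => by
      linarith [dist_triangle_right y x' 0, mem_ball.mp hy, mem_ball.mp hx']
  refine (lintegral_rpow_mul_lintegral_rpow_le_wolffPotential hp hR.le (by linarith) hν hq he
    hβ).trans ?_
  gcongr
  exact wolffPotential_mono Measure.restrict_le_self _ _ _

theorem stmt_10
    (N k : ℕ) (hN : 3 ≤ N) (hk1 : 1 ≤ k) (hk : k + 2 < N)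
    (μ H αm αp : ℝ)
    (hH : H = ((N : ℝ) - (k : ℝ) - 2) / 2) (hμ : μ ≤ H ^ 2)
    (hαm : αm = H - Real.sqrt (H ^ 2 - μ)) (hαp : αp = H + Real.sqrt (H ^ 2 - μ))
    (p ϑ : ℝ)
    (hp1 : max 1 (((N : ℝ) - (k : ℝ) - αm) / ((N : ℝ) - 2 - αm)) < p)
    (hp2 : p < (2 + αp) / αp)
    (hϑ : ϑ = (2 - (p - 1) * αp) / p)
    (R : ℝ) (hR : 0 < R)
    :
    ∃ C > 0, ∀ ν : Measure (EuclideanSpace ℝ (Fin k)), IsFiniteMeasure ν →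
      (∃ K, IsCompact K ∧ K ⊆ Metric.ball (0 : EuclideanSpace ℝ (Fin k)) (R / 2) ∧
        ν Kᶜ = 0) →
      (∫⁻ x' in Metric.ball (0 : EuclideanSpace ℝ (Fin k)) R,
        ∫⁻ x₁ in Ioo (0 : ℝ) R,
          ENNReal.ofReal (x₁ ^ ((N : ℝ) - (k : ℝ) - 1 - (p + 1) * αm)) *
            (∫⁻ y' in Metric.ball (0 : EuclideanSpace ℝ (Fin k)) R,
              ENNReal.ofReal ((x₁ + dist x' y') ^ (-((N : ℝ) - 2 * αm - 2))) ∂ν) ^ p)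
      ≤ ENNReal.ofReal C *
        ∫⁻ x' : EuclideanSpace ℝ (Fin k),
          (∫⁻ r in Ioo (0 : ℝ) (8 * R),
            ν (Metric.ball x' r) * ENNReal.ofReal (r ^ (ϑ - (k : ℝ) - 1))) ^ p :=
  stmt_10_general N k hk1 hk μ H αm αp hH hαm hαp p ϑ hp1 hp2 hϑ R
end

section
/- Let R > 0. There exists a constant C = C(R, N, k, μ, p) such that for every finite positive Borel measure ν on ℝ^k with compact support contained in B^k(0, R/2), ∫_{B^k(0,R)} ∫_0^R x₁^{N−k−1−(p+1)α₋} ( ∫_{B^k(0,R)} ( x₁ + |x′−y′| )^{−(N−2α₋−2)} dν(y′) )^p dx₁ dx′ ≥ C^{−1} ∫_{ℝ^k} ( sup_{0<r<R/2} ν(B^k(x′,r)) r^{ϑ−k} )^p dx′. -/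
open MeasureTheory Metric Set
open scoped ENNReal

/-!
Fix x′ and r < R/2. For x₁ < r every y′ ∈ B(x′, r) has x₁ + |x′ − y′| < 2r, so the inner
integral is at least (2r)^(−β) ν(B(x′, r)) with β = N − 2α₋ − 2. Integrating x₁^a,
a = N − k − 1 − (p + 1)α₋, over (0, r) gives r^(a+1)/(a+1), and since α₋ + α₊ = N − k − 2 the
exponents satisfy (ϑ − k)p = a + 1 − βp, so the double integral at x′ dominates
(ν(B(x′, r)) r^(ϑ−k))^p / ((a + 1) 2^(βp)). Taking the supremum over r bounds the maximal function
pointwise; it vanishes off B(0, R) because ν lives in B(0, R/2).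
-/

theorem lintegral_Ioo_rpow {a r : ℝ} (ha : -1 < a) (hr : 0 < r) :
    ∫⁻ t in Ioo (0 : ℝ) r, ENNReal.ofReal (t ^ a) = ENNReal.ofReal (r ^ (a + 1) / (a + 1)) := by
  rw [← ofReal_integral_eq_lintegral_ofReal ((intervalIntegral.integrableOn_Ioo_rpow_iff hr).2 ha)
      ((ae_restrict_iff' measurableSet_Ioo).2 (.of_forall fun t ht => Real.rpow_nonneg ht.1.le a)),
    ← integral_Ioc_eq_integral_Ioo, ← intervalIntegral.integral_of_le hr.le,
    integral_rpow (.inl ha), Real.zero_rpow (by linarith), sub_zero]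

theorem rpow_rpow_eq_of_mul_eq {a β γ p r : ℝ} (ha : a + 1 ≠ 0) (hγ : γ * p = a + 1 - β * p)
    (hr : 0 < r) :
    (r ^ γ) ^ p = (a + 1) * 2 ^ (β * p) * (r ^ (a + 1) / (a + 1)) * ((2 * r) ^ (-β)) ^ p := by
  rw [← Real.rpow_mul hr.le, hγ, ← Real.rpow_mul (by positivity), Real.mul_rpow (by norm_num) hr.le,
    neg_mul, Real.rpow_neg (by norm_num), Real.rpow_neg hr.le, Real.rpow_sub hr]
  field_simp

section

variable {X : Type*} [PseudoMetricSpace X] [MeasurableSpace X] (ν : Measure X)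

theorem support_iSup_measure_ball_mul_rpow_subset {c : X} {s ρ p : ℝ} (hν : ν (ball c s)ᶜ = 0)
    (hp : 0 < p) (w : ℝ → ℝ≥0∞) :
    Function.support (fun x => (⨆ r ∈ Ioo 0 ρ, ν (ball x r) * w r) ^ p) ⊆ ball c (s + ρ) := by
  intro x hx
  by_contra hxc
  refine hx ?_
  suffices ⨆ r ∈ Ioo 0 ρ, ν (ball x r) * w r = 0 by simp only [this, ENNReal.zero_rpow_of_pos hp]
  refine le_antisymm (iSup₂_le fun r hr => ?_) zero_le
  have hdisj : Disjoint (ball x r) (ball c s) :=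
    ball_disjoint_ball (by linarith [hr.2, not_lt.1 (mem_ball.not.1 hxc)])
  rw [measure_mono_null hdisj.subset_compl_right hν, zero_mul]

variable [OpensMeasurableSpace X]

theorem rpow_two_mul_mul_measure_ball_le_lintegral {β r t : ℝ} (hβ : 0 ≤ β) (ht : t ∈ Ioo 0 r)
    (x : X) :
    ENNReal.ofReal ((2 * r) ^ (-β)) * ν (ball x r) ≤
      ∫⁻ y, ENNReal.ofReal ((t + dist x y) ^ (-β)) ∂ν :=
  calc ENNReal.ofReal ((2 * r) ^ (-β)) * ν (ball x r)
      = ∫⁻ _ in ball x r, ENNReal.ofReal ((2 * r) ^ (-β)) ∂ν := (setLIntegral_const _ _).symm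
    _ ≤ ∫⁻ y in ball x r, ENNReal.ofReal ((t + dist x y) ^ (-β)) ∂ν :=
        setLIntegral_mono' measurableSet_ball fun y hy => ENNReal.ofReal_le_ofReal <|
          Real.rpow_le_rpow_of_nonpos (add_pos_of_pos_of_nonneg ht.1 dist_nonneg)
            (by linarith [mem_ball'.1 hy, ht.2]) (neg_nonpos.2 hβ)
    _ ≤ _ := setLIntegral_le_lintegral _ _

theorem rpow_mul_measure_ball_rpow_le_lintegral {a β p r ρ : ℝ} (ha : -1 < a) (hβ : 0 ≤ β)
    (hp : 0 ≤ p) (hr : 0 < r) (hrρ : r ≤ ρ) (x : X) :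
    ENNReal.ofReal (r ^ (a + 1) / (a + 1)) * (ENNReal.ofReal ((2 * r) ^ (-β)) * ν (ball x r)) ^ p ≤
      ∫⁻ t in Ioo 0 ρ, ENNReal.ofReal (t ^ a) *
        (∫⁻ y, ENNReal.ofReal ((t + dist x y) ^ (-β)) ∂ν) ^ p := by
  rw [← lintegral_Ioo_rpow ha hr, ← lintegral_mul_const _ (by fun_prop)]
  calc _ ≤ ∫⁻ t in Ioo 0 r, ENNReal.ofReal (t ^ a) *
        (∫⁻ y, ENNReal.ofReal ((t + dist x y) ^ (-β)) ∂ν) ^ p :=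
        setLIntegral_mono' measurableSet_Ioo fun t ht => by
          gcongr
          exact rpow_two_mul_mul_measure_ball_le_lintegral ν hβ ht x
    _ ≤ _ := lintegral_mono_set (Ioo_subset_Ioo_right hrρ)

theorem measure_ball_mul_rpow_rpow_le {a β γ p r ρ : ℝ} (ha : -1 < a) (hβ : 0 ≤ β) (hp : 0 ≤ p)
    (hγ : γ * p = a + 1 - β * p) (hr : 0 < r) (hrρ : r ≤ ρ) (x : X) :
    (ν (ball x r) * ENNReal.ofReal (r ^ γ)) ^ p ≤ ENNReal.ofReal ((a + 1) * 2 ^ (β * p)) *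
      ∫⁻ t in Ioo 0 ρ, ENNReal.ofReal (t ^ a) *
        (∫⁻ y, ENNReal.ofReal ((t + dist x y) ^ (-β)) ∂ν) ^ p := by
  refine le_of_eq_of_le ?_ (mul_le_mul_right (rpow_mul_measure_ball_rpow_le_lintegral ν ha hβ hp hr hrρ x) _)
  rw [ENNReal.mul_rpow_of_nonneg _ _ hp, ENNReal.mul_rpow_of_nonneg _ _ hp,
    ENNReal.ofReal_rpow_of_nonneg (by positivity) hp, ENNReal.ofReal_rpow_of_nonneg (by positivity) hp,
    rpow_rpow_eq_of_mul_eq (by linarith) hγ hr]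
  have ha' : 0 < a + 1 := by linarith
  rw [ENNReal.ofReal_mul (by positivity), ENNReal.ofReal_mul (by positivity)]
  ring

theorem iSup_measure_ball_mul_rpow_rpow_le {a β γ p ρ ρ' : ℝ} (ha : -1 < a) (hβ : 0 ≤ β)
    (hp : 0 < p) (hγ : γ * p = a + 1 - β * p) (hρ : ρ ≤ ρ') (x : X) :
    (⨆ r ∈ Ioo 0 ρ, ν (ball x r) * ENNReal.ofReal (r ^ γ)) ^ p ≤
      ENNReal.ofReal ((a + 1) * 2 ^ (β * p)) *
        ∫⁻ t in Ioo 0 ρ', ENNReal.ofReal (t ^ a) *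
          (∫⁻ y, ENNReal.ofReal ((t + dist x y) ^ (-β)) ∂ν) ^ p := by
  rw [← ENNReal.le_rpow_inv_iff hp]
  exact iSup₂_le fun r hr => (ENNReal.le_rpow_inv_iff hp).2 <|
    measure_ball_mul_rpow_rpow_le ν ha hβ hp.le hγ hr.1 (hr.2.le.trans hρ) x

end

theorem stmt_11_general
    (N k : ℕ) (hk : k + 2 < N)
    (μ H αm αp : ℝ)
    (hH : H = ((N : ℝ) - (k : ℝ) - 2) / 2)
    (hαm : αm = H - Real.sqrt (H ^ 2 - μ)) (hαp : αp = H + Real.sqrt (H ^ 2 - μ))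
    (p ϑ : ℝ)
    (hp1 : max 1 (((N : ℝ) - (k : ℝ) - αm) / ((N : ℝ) - 2 - αm)) < p)
    (hp2 : p < (2 + αp) / αp)
    (hϑ : ϑ = (2 - (p - 1) * αp) / p)
    (R : ℝ) (hR : 0 < R)
    :
    ∃ C > 0, ∀ ν : Measure (EuclideanSpace ℝ (Fin k)), IsFiniteMeasure ν →
      (∃ K, IsCompact K ∧ K ⊆ Metric.ball (0 : EuclideanSpace ℝ (Fin k)) (R / 2) ∧
        ν Kᶜ = 0) →
      (ENNReal.ofReal C)⁻¹ *
        ∫⁻ x' : EuclideanSpace ℝ (Fin k),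
          (⨆ r ∈ Ioo (0 : ℝ) (R / 2),
            ν (Metric.ball x' r) * ENNReal.ofReal (r ^ (ϑ - (k : ℝ)))) ^ p
      ≤ (∫⁻ x' in Metric.ball (0 : EuclideanSpace ℝ (Fin k)) R,
        ∫⁻ x₁ in Ioo (0 : ℝ) R,
          ENNReal.ofReal (x₁ ^ ((N : ℝ) - (k : ℝ) - 1 - (p + 1) * αm)) *
            (∫⁻ y' in Metric.ball (0 : EuclideanSpace ℝ (Fin k)) R,
              ENNReal.ofReal ((x₁ + dist x' y') ^ (-((N : ℝ) - 2 * αm - 2))) ∂ν) ^ p) := by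
  have hNk : (k : ℝ) + 2 < N := by exact_mod_cast hk
  have hH0 : 0 < H := by rw [hH]; linarith
  have hsqrt := Real.sqrt_nonneg (H ^ 2 - μ)
  have hαp0 : 0 < αp := by rw [hαp]; linarith
  have hαm_le : αm ≤ αp := by rw [hαm, hαp]; linarith
  have hsum : αm + αp = N - k - 2 := by rw [hαm, hαp, hH]; ring
  have hp : 0 < p := (zero_lt_one.trans_le (le_max_left _ _)).trans hp1
  have hpαp : p * αp < 2 + αp := (lt_div_iff₀ hαp0).1 hp2
  set a : ℝ := (N : ℝ) - k - 1 - (p + 1) * αm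
  set β : ℝ := (N : ℝ) - 2 * αm - 2
  have ha : -1 < a := by nlinarith
  have hβ : 0 ≤ β := by linarith [k.cast_nonneg (α := ℝ)]
  have hγ : (ϑ - k) * p = a + 1 - β * p := by
    rw [hϑ]; field_simp; linear_combination (1 - p) * hsum
  have hC : 0 < (a + 1) * 2 ^ (β * p) := by have := Real.rpow_pos_of_pos two_pos (β * p); nlinarith
  refine ⟨_, hC, fun ν _ ⟨K, _, hKs, hKz⟩ => ?_⟩
  have hν : ν (ball 0 (R / 2))ᶜ = 0 := measure_mono_null (compl_subset_compl.2 hKs) hKz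
  have hνR : ν.restrict (ball 0 R) = ν := Measure.restrict_eq_self_of_ae_mem <| ae_iff.2 <|
    measure_mono_null (compl_subset_compl.2 (ball_subset_ball (by linarith))) hν
  have hC' : ENNReal.ofReal ((a + 1) * 2 ^ (β * p)) ≠ 0 := (ENNReal.ofReal_pos.2 hC).ne'
  rw [hνR, ← setLIntegral_eq_of_support_subset (s := ball 0 R) 
      ((support_iSup_measure_ball_mul_rpow_subset ν hν hp _).trans
        (ball_subset_ball (add_halves R).le)),
    ← lintegral_const_mul' _ _ (ENNReal.inv_ne_top.2 hC')]
  exact lintegral_mono fun x' => (ENNReal.inv_mul_le_iff hC' ENNReal.ofReal_ne_top).2 <|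
    iSup_measure_ball_mul_rpow_rpow_le ν ha hβ hp hγ (half_le_self hR.le) x'

theorem stmt_11
    (N k : ℕ) (hN : 3 ≤ N) (hk1 : 1 ≤ k) (hk : k + 2 < N)
    (μ H αm αp : ℝ)
    (hH : H = ((N : ℝ) - (k : ℝ) - 2) / 2) (hμ : μ ≤ H ^ 2)
    (hαm : αm = H - Real.sqrt (H ^ 2 - μ)) (hαp : αp = H + Real.sqrt (H ^ 2 - μ))
    (p ϑ : ℝ)
    (hp1 : max 1 (((N : ℝ) - (k : ℝ) - αm) / ((N : ℝ) - 2 - αm)) < p)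
    (hp2 : p < (2 + αp) / αp)
    (hϑ : ϑ = (2 - (p - 1) * αp) / p)
    (R : ℝ) (hR : 0 < R)
    :
    ∃ C > 0, ∀ ν : Measure (EuclideanSpace ℝ (Fin k)), IsFiniteMeasure ν →
      (∃ K, IsCompact K ∧ K ⊆ Metric.ball (0 : EuclideanSpace ℝ (Fin k)) (R / 2) ∧
        ν Kᶜ = 0) →
      (ENNReal.ofReal C)⁻¹ *
        ∫⁻ x' : EuclideanSpace ℝ (Fin k),
          (⨆ r ∈ Ioo (0 : ℝ) (R / 2),
            ν (Metric.ball x' r) * ENNReal.ofReal (r ^ (ϑ - (k : ℝ)))) ^ p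
      ≤ (∫⁻ x' in Metric.ball (0 : EuclideanSpace ℝ (Fin k)) R,
        ∫⁻ x₁ in Ioo (0 : ℝ) R,
          ENNReal.ofReal (x₁ ^ ((N : ℝ) - (k : ℝ) - 1 - (p + 1) * αm)) *
            (∫⁻ y' in Metric.ball (0 : EuclideanSpace ℝ (Fin k)) R,
              ENNReal.ofReal ((x₁ + dist x' y') ^ (-((N : ℝ) - 2 * αm - 2))) ∂ν) ^ p) :=
  stmt_11_general N k hk μ H αm αp hH hαm hαp p ϑ hp1 hp2 hϑ R hR
end

section
/- Let k ≥ 1 be an integer, ν a finite positive Borel measure on ℝ^k, a > 0, p ≥ 1, R > 0 and x′ ∈ ℝ^k. Then ∫_0^{4R} ( ν(B^k(x′,r)) r^{−a} )^p r^{−1} dr ≤ C ( ∫_0^{8R} ν(B^k(x′,r)) r^{−a−1} dr )^p, where C is a constant depending only on p and a (one may take C = 2^{2ap} (ln 2)^{1−p}). -/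
/-!
Write `g r = ν(B(x', r))` and `I` for the right-hand integral. Since `g` is nondecreasing,
`g r r^{-a} ≤ 2^{a+1} ∫_r^{2r} g s s^{-a-1} ds ≤ 2^{a+1} I` for every `r < 4R`. Splitting the
`p`-th power as `(g r r^{-a})^{p-1} · g r r^{-a}` and bounding the first factor by `(2^{a+1} I)^{p-1}`
leaves `(2^{a+1} I)^{p-1} ∫_0^{4R} g r r^{-a-1} dr ≤ 2^{(a+1)(p-1)} I^p`.
-/

open MeasureTheory Metric Set
open scoped ENNReal

theorem lintegral_rpow_mul_le_rpow_sub_one_mul {α : Type*} [MeasurableSpace α] {μ : Measure α}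
    {f w : α → ℝ≥0∞} {K : ℝ≥0∞} {p : ℝ} (hp : 1 ≤ p) (hK : K ≠ ∞)
    (hf : ∀ᵐ x ∂μ, f x ≤ K) :
    ∫⁻ x, f x ^ p * w x ∂μ ≤ K ^ (p - 1) * ∫⁻ x, f x * w x ∂μ := by
  have hp₁ : 0 ≤ p - 1 := sub_nonneg.mpr hp
  rw [← lintegral_const_mul' _ _ (ENNReal.rpow_ne_top_of_nonneg hp₁ hK)]
  refine lintegral_mono_ae ?_
  filter_upwards [hf] with x hx
  calc f x ^ p * w x = f x ^ (p - 1) * (f x * w x) := by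
        conv_lhs => rw [← sub_add_cancel p 1, ENNReal.rpow_add_of_nonneg _ _ hp₁ zero_le_one,
          ENNReal.rpow_one, mul_assoc]
    _ ≤ K ^ (p - 1) * (f x * w x) := by gcongr

theorem Monotone.mul_rpow_neg_le_lintegral_Ioo {g : ℝ → ℝ≥0∞} (hg : Monotone g) {a r : ℝ}
    (ha : -1 ≤ a) (hr : 0 < r) :
    g r * ENNReal.ofReal (r ^ (-a)) ≤
      ENNReal.ofReal (2 ^ (a + 1)) * ∫⁻ s in Ioo r (2 * r), g s * ENNReal.ofReal (s ^ (-a - 1)) := by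
  have hlower : g r * ENNReal.ofReal ((2 * r) ^ (-a - 1)) * ENNReal.ofReal r ≤
      ∫⁻ s in Ioo r (2 * r), g s * ENNReal.ofReal (s ^ (-a - 1)) := by
    calc g r * ENNReal.ofReal ((2 * r) ^ (-a - 1)) * ENNReal.ofReal r
        = ∫⁻ _ in Ioo r (2 * r), g r * ENNReal.ofReal ((2 * r) ^ (-a - 1)) := by
          rw [setLIntegral_const, Real.volume_Ioo, two_mul, add_sub_cancel_right]
      _ ≤ ∫⁻ s in Ioo r (2 * r), g s * ENNReal.ofReal (s ^ (-a - 1)) := by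
          refine setLIntegral_mono' measurableSet_Ioo fun s hs => ?_
          gcongr ?_ * ENNReal.ofReal ?_
          · exact hg hs.1.le
          · exact Real.rpow_le_rpow_of_nonpos (hr.trans hs.1) hs.2.le (by linarith)
  have hexp : 2 ^ (a + 1) * ((2 * r) ^ (-a - 1) * r) = r ^ (-a) := by
    rw [Real.mul_rpow zero_le_two hr.le, mul_assoc, ← Real.rpow_add_one hr.ne', ← mul_assoc,
      ← Real.rpow_add two_pos]
    norm_num
  calc g r * ENNReal.ofReal (r ^ (-a))
      = ENNReal.ofReal (2 ^ (a + 1)) * (g r * ENNReal.ofReal ((2 * r) ^ (-a - 1)) *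
          ENNReal.ofReal r) := by
        rw [← hexp, ENNReal.ofReal_mul (by positivity), ENNReal.ofReal_mul (by positivity)]
        ring
    _ ≤ _ := by gcongr

theorem Monotone.lintegral_Ioo_rpow_le {g : ℝ → ℝ≥0∞} (hg : Monotone g) {a p : ℝ} (ha : -1 ≤ a)
    (hp : 1 ≤ p) (R : ℝ) :
    ∫⁻ r in Ioo 0 R, (g r * ENNReal.ofReal (r ^ (-a))) ^ p * ENNReal.ofReal r⁻¹ ≤
      ENNReal.ofReal (2 ^ ((a + 1) * (p - 1))) *
        (∫⁻ r in Ioo 0 (2 * R), g r * ENNReal.ofReal (r ^ (-a - 1))) ^ p := by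
  set I := ∫⁻ r in Ioo 0 (2 * R), g r * ENNReal.ofReal (r ^ (-a - 1))
  have hp₁ : 0 ≤ p - 1 := sub_nonneg.mpr hp
  rcases eq_or_ne I ∞ with hI | hI
  · rw [hI, ENNReal.top_rpow_of_pos (by linarith), ENNReal.mul_top (by positivity)]
    exact le_top
  have hsub : ∀ {r}, r ∈ Ioo 0 R → Ioo r (2 * r) ⊆ Ioo 0 (2 * R) := fun hr s hs =>
    ⟨hr.1.trans hs.1, by linarith [hs.2, hr.2]⟩
  have hbound : ∀ r ∈ Ioo 0 R, g r * ENNReal.ofReal (r ^ (-a)) ≤ ENNReal.ofReal (2 ^ (a + 1)) * I :=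
    fun r hr => (hg.mul_rpow_neg_le_lintegral_Ioo ha hr.1).trans
      (by gcongr; exact lintegral_mono_set (hsub hr))
  calc ∫⁻ r in Ioo 0 R, (g r * ENNReal.ofReal (r ^ (-a))) ^ p * ENNReal.ofReal r⁻¹
      ≤ (ENNReal.ofReal (2 ^ (a + 1)) * I) ^ (p - 1) *
          ∫⁻ r in Ioo 0 R, g r * ENNReal.ofReal (r ^ (-a)) * ENNReal.ofReal r⁻¹ :=
        lintegral_rpow_mul_le_rpow_sub_one_mul hp (by finiteness)
          (ae_restrict_of_forall_mem measurableSet_Ioo hbound)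
    _ = (ENNReal.ofReal (2 ^ (a + 1)) * I) ^ (p - 1) *
          ∫⁻ r in Ioo 0 R, g r * ENNReal.ofReal (r ^ (-a - 1)) := by
        congr 1
        refine setLIntegral_congr_fun measurableSet_Ioo fun r hr => ?_
        rw [mul_assoc, ← ENNReal.ofReal_mul (Real.rpow_nonneg hr.1.le _), ← Real.rpow_neg_one r,
          ← Real.rpow_add hr.1, sub_eq_add_neg]
    _ ≤ (ENNReal.ofReal (2 ^ (a + 1)) * I) ^ (p - 1) * I := by
        gcongr
        exact lintegral_mono_set fun r hr => ⟨hr.1, by linarith [hr.1, hr.2]⟩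
    _ = ENNReal.ofReal (2 ^ ((a + 1) * (p - 1))) * I ^ p := by
        rw [ENNReal.mul_rpow_of_nonneg _ _ hp₁, ENNReal.ofReal_rpow_of_pos (by positivity),
          ← Real.rpow_mul zero_le_two, mul_assoc]
        congr 1
        conv_rhs => rw [← sub_add_cancel p 1, ENNReal.rpow_add_of_nonneg _ _ hp₁ zero_le_one,
          ENNReal.rpow_one]

theorem stmt_12 (a p : ℝ) (ha : 0 < a) (hp : 1 ≤ p) :
    ∃ C > 0, ∀ (k : ℕ), 1 ≤ k →
      ∀ ν : Measure (EuclideanSpace ℝ (Fin k)), IsFiniteMeasure ν →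
      ∀ R : ℝ, 0 < R → ∀ x' : EuclideanSpace ℝ (Fin k),
        ∫⁻ r in Ioo (0 : ℝ) (4 * R),
            (ν (Metric.ball x' r) * ENNReal.ofReal (r ^ (-a))) ^ p *
              ENNReal.ofReal r⁻¹
          ≤ ENNReal.ofReal C *
            (∫⁻ r in Ioo (0 : ℝ) (8 * R),
              ν (Metric.ball x' r) * ENNReal.ofReal (r ^ (-a - 1))) ^ p := by
  refine ⟨2 ^ ((a + 1) * (p - 1)), by positivity, fun k _ ν _ R _ x' => ?_⟩
  have hball : Monotone fun r => ν (ball x' r) := fun _ _ h => measure_mono (ball_subset_ball h)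
  rw [show 8 * R = 2 * (4 * R) by ring]
  exact hball.lintegral_Ioo_rpow_le (by linarith) hp (4 * R)
end

section
/- Let k ≥ 1 be an integer and α > 0. There exists a constant C = C(α) such that for every finite positive Borel measure ν on ℝ^k, every R > 0, every x′ ∈ ℝ^k and every 0 < x₁ < R, one has ∫_{B^k(x′,2R)} ( x₁ + |x′−y′| )^{−α} dν(y′) ≤ C ∫_{x₁}^{4R} ν(B^k(x′,r)) r^{−α−1} dr. -/
open MeasureTheory Metric Set

/-!
Write `d = |x' - y'|`. Since `x₁ + d < 3R = (3/4)·4R`, the integral of `r^(-α-1)` over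
`(max d x₁, 4R)` is at least `(1 - (3/4)^α)/α · (x₁ + d)^(-α)`, so the integrand on the left is
bounded by `C ∫_{x₁}^{4R} 1[d < r] r^(-α-1) dr` with `C = α / (1 - (3/4)^α)`. Integrating in `y'`
and exchanging the order of integration (Tonelli) turns `∫ 1[d < r] dν(y')` into `ν(B(x', r))`.
-/

theorem lintegral_Ioo_rpow_neg_sub_one {α a b : ℝ} (hα : α ≠ 0) (ha : 0 < a) (hab : a ≤ b) :
    ∫⁻ r in Ioo a b, ENNReal.ofReal (r ^ (-α - 1)) =
      ENNReal.ofReal ((a ^ (-α) - b ^ (-α)) / α) := by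
  have h0 : (0 : ℝ) ∉ uIcc a b := by
    rw [uIcc_of_le hab]
    exact fun h => h.1.not_gt ha
  have hint : IntegrableOn (fun r : ℝ => r ^ (-α - 1)) (Ioc a b) :=
    (intervalIntegrable_iff_integrableOn_Ioc_of_le hab).1
      (intervalIntegral.intervalIntegrable_rpow (Or.inr h0))
  have hpos : 0 ≤ᵐ[volume.restrict (Ioc a b)] fun r : ℝ => r ^ (-α - 1) :=
    (ae_restrict_iff' measurableSet_Ioc).2 (ae_of_all _ fun r hr =>
      Real.rpow_nonneg (ha.trans hr.1).le _)
  rw [setLIntegral_congr Ioo_ae_eq_Ioc, ← ofReal_integral_eq_lintegral_ofReal hint hpos,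
    ← intervalIntegral.integral_of_le hab,
    integral_rpow (Or.inr ⟨by simpa using hα, h0⟩), sub_add_cancel, div_neg, ← neg_div, neg_sub]

theorem one_sub_three_quarters_rpow_pos {α : ℝ} (hα : 0 < α) : 0 < 1 - (3 / 4 : ℝ) ^ α :=
  sub_pos.2 (Real.rpow_lt_one (by norm_num) (by norm_num) hα)

theorem rpow_neg_le_div_of_four_mul_le {α m t b : ℝ} (hα : 0 < α) (hm : 0 < m) (hmt : m ≤ t)
    (htb : 4 * t ≤ 3 * b) :
    t ^ (-α) ≤ (m ^ (-α) - b ^ (-α)) / (1 - (3 / 4 : ℝ) ^ α) := by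
  have hq := one_sub_three_quarters_rpow_pos hα
  have ht : 0 < t := hm.trans_le hmt
  have hmt' : t ^ (-α) ≤ m ^ (-α) := Real.rpow_le_rpow_of_nonpos hm hmt (by linarith)
  have hbt : b ^ (-α) ≤ (3 / 4 : ℝ) ^ α * t ^ (-α) := by
    calc b ^ (-α) ≤ (4 / 3 * t) ^ (-α) :=
          Real.rpow_le_rpow_of_nonpos (by positivity) (by linarith) (by linarith)
      _ = (3 / 4 : ℝ) ^ α * t ^ (-α) := by
          rw [Real.mul_rpow (by norm_num) ht.le, Real.rpow_neg (by norm_num),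
            ← Real.inv_rpow (by norm_num)]
          norm_num
  rw [le_div_iff₀ hq]
  nlinarith

theorem ofReal_rpow_neg_le_mul_lintegral_Ioo {α m t b : ℝ} (hα : 0 < α) (hm : 0 < m)
    (hmt : m ≤ t) (htb : 4 * t ≤ 3 * b) :
    ENNReal.ofReal (t ^ (-α)) ≤ ENNReal.ofReal (α / (1 - (3 / 4 : ℝ) ^ α)) *
      ∫⁻ r in Ioo m b, ENNReal.ofReal (r ^ (-α - 1)) := by
  have hq := one_sub_three_quarters_rpow_pos hα
  rw [lintegral_Ioo_rpow_neg_sub_one hα.ne' hm (by linarith),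
    ← ENNReal.ofReal_mul (by positivity), div_mul_div_comm, mul_comm α,
    mul_div_mul_right _ _ hα.ne']
  exact ENNReal.ofReal_le_ofReal (rpow_neg_le_div_of_four_mul_le hα hm hmt htb)

theorem lintegral_setLIntegral_Ioi_dist {X : Type*} [PseudoMetricSpace X] [MeasurableSpace X]
    [OpensMeasurableSpace X] (ν : Measure X) [SFinite ν] (μ : Measure ℝ) [SFinite μ]
    (x : X) {w : ℝ → ENNReal} (hw : Measurable w) :
    ∫⁻ y, ∫⁻ r in Ioi (dist x y), w r ∂μ ∂ν = ∫⁻ r, ν (ball x r) * w r ∂μ := by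
  set F : X → ℝ → ENNReal := fun y r => (ball x r).indicator (fun _ => w r) y
  have hF : Measurable (Function.uncurry F) := by
    have hdist : Measurable fun p : X × ℝ => dist x p.1 :=
      (continuous_const.dist continuous_id).measurable.comp measurable_fst
    have : Function.uncurry F = {p : X × ℝ | dist x p.1 < p.2}.indicator (w ∘ Prod.snd) := by
      ext ⟨y, r⟩
      simp only [F, Function.uncurry_apply_pair, indicator, mem_ball', mem_ofPred_eq,
        Function.comp_apply]
    rw [this]
    exact (hw.comp measurable_snd).indicator (measurableSet_lt hdist measurable_snd)
  calc ∫⁻ y, ∫⁻ r in Ioi (dist x y), w r ∂μ ∂ν = ∫⁻ y, ∫⁻ r, F y r ∂μ ∂ν := by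
        refine lintegral_congr fun y => ?_
        rw [← lintegral_indicator measurableSet_Ioi]
        simp only [F, indicator, mem_Ioi, mem_ball']
    _ = ∫⁻ r, ∫⁻ y, F y r ∂ν ∂μ := lintegral_lintegral_swap hF.aemeasurable
    _ = ∫⁻ r, ν (ball x r) * w r ∂μ := by
        refine lintegral_congr fun r => ?_
        rw [lintegral_indicator_const measurableSet_ball, mul_comm]

theorem stmt_13 (α : ℝ) (hα : 0 < α) :
    ∃ C > 0, ∀ (k : ℕ), 1 ≤ k →
      ∀ ν : Measure (EuclideanSpace ℝ (Fin k)), IsFiniteMeasure ν →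
      ∀ R : ℝ, 0 < R → ∀ x' : EuclideanSpace ℝ (Fin k), ∀ x₁ : ℝ, 0 < x₁ → x₁ < R →
        ∫⁻ y' in Metric.ball x' (2 * R),
            ENNReal.ofReal ((x₁ + dist x' y') ^ (-α)) ∂ν
          ≤ ENNReal.ofReal C *
            ∫⁻ r in Ioo x₁ (4 * R),
              ν (Metric.ball x' r) * ENNReal.ofReal (r ^ (-α - 1)) := by
  have hq := one_sub_three_quarters_rpow_pos hα
  refine ⟨α / (1 - (3 / 4 : ℝ) ^ α), by positivity, fun k _ ν _ R _ x' x₁ hx₁ hx₁R => ?_⟩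
  set C := α / (1 - (3 / 4 : ℝ) ^ α)
  set w : ℝ → ENNReal := fun r => ENNReal.ofReal (r ^ (-α - 1))
  have hIoo : ∀ d, Ioi d ∩ Ioo x₁ (4 * R) = Ioo (max d x₁) (4 * R) := fun d => by
    ext r
    simp only [mem_inter_iff, mem_Ioi, mem_Ioo, max_lt_iff]
    tauto
  calc ∫⁻ y in ball x' (2 * R), ENNReal.ofReal ((x₁ + dist x' y) ^ (-α)) ∂ν
      ≤ ∫⁻ y in ball x' (2 * R), ENNReal.ofReal C *
          ∫⁻ r in Ioi (dist x' y), w r ∂volume.restrict (Ioo x₁ (4 * R)) ∂ν := by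
        refine setLIntegral_mono' measurableSet_ball fun y hy => ?_
        rw [Measure.restrict_restrict measurableSet_Ioi, hIoo]
        rw [mem_ball'] at hy
        have hd : 0 ≤ dist x' y := dist_nonneg
        exact ofReal_rpow_neg_le_mul_lintegral_Ioo hα (lt_max_of_lt_right hx₁)
          (max_le (by linarith) (by linarith)) (by linarith)
    _ = ENNReal.ofReal C *
          ∫⁻ r in Ioo x₁ (4 * R), ν.restrict (ball x' (2 * R)) (ball x' r) * w r := by
        rw [lintegral_const_mul' _ _ ENNReal.ofReal_ne_top,
          lintegral_setLIntegral_Ioi_dist _ _ _ (by fun_prop)]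
    _ ≤ ENNReal.ofReal C * ∫⁻ r in Ioo x₁ (4 * R), ν (ball x' r) * w r := by
        gcongr
        exact Measure.restrict_le_self
end
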